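/- Fix an even N ≥ 2 and set r₂ = r₁ + e + N/2, ρ₁ = r₁ + e + d + (N-1)/2, ρ₂ = r₁ - 1/2 + e with r₁, e, d > 0. Then for the Bannai-Ito recurrence coefficients, uₙ = n(n+4r₁-2+4e+2d+N)(-n+4r₁+2e+N)(n-2+2e+2d)/(16(n-1+e+d)²) for even n with 2 ≤ n ≤ N, uₙ = (n-1+2e+2d+N)(n-1+2d)(n-1+2e)(-n+1+N)/(16(n-1+e+d)²) for odd n with 1 ≤ n ≤ N-1; in particular uₙ > 0 for 1 ≤ n ≤ N and u_{N+1} = 0. -/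
import Mathlib


/-- The Bannai–Ito recurrence coefficient uₙ. -/
noncomputable def biU (r₁ r₂ ρ₁ ρ₂ : ℝ) (n : ℕ) : ℝ :=
  if Even n then
    -((n : ℝ) * ((n : ℝ) + 2 * ρ₁ + 2 * ρ₂) * ((n : ℝ) - 2 * r₁ - 2 * r₂)
        * ((n : ℝ) + 2 * ρ₁ + 2 * ρ₂ - 2 * r₁ - 2 * r₂)) /
      (16 * ((n : ℝ) + ρ₁ + ρ₂ - r₁ - r₂) ^ 2)
  else
    -((((n : ℝ) + 2 * ρ₁ - 2 * r₁) * ((n : ℝ) + 2 * ρ₁ - 2 * r₂)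
        * ((n : ℝ) + 2 * ρ₂ - 2 * r₁) * ((n : ℝ) + 2 * ρ₂ - 2 * r₂))) /
      (16 * ((n : ℝ) + ρ₁ + ρ₂ - r₁ - r₂) ^ 2)

/-- With the truncation parametrization for even N, the Bannai–Ito recurrence
coefficients take the stated explicit positive form for 1 ≤ n ≤ N, and
u_{N+1} = 0. -/
theorem stmt17 (N : ℕ) (hN : Even N) (hN2 : 2 ≤ N) (r₁ e d : ℝ)
    (hr₁ : 0 < r₁) (he : 0 < e) (hd : 0 < d)
    (r₂ ρ₁ ρ₂ : ℝ)
    (hr₂ : r₂ = r₁ + e + (N : ℝ) / 2)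
    (hρ₁ : ρ₁ = r₁ + e + d + ((N : ℝ) - 1) / 2)
    (hρ₂ : ρ₂ = r₁ - 1/2 + e) :
    (∀ n : ℕ, Even n → 2 ≤ n → n ≤ N →
      biU r₁ r₂ ρ₁ ρ₂ n =
        (n : ℝ) * ((n : ℝ) + 4 * r₁ - 2 + 4 * e + 2 * d + (N : ℝ))
          * (-(n : ℝ) + 4 * r₁ + 2 * e + (N : ℝ)) * ((n : ℝ) - 2 + 2 * e + 2 * d) /
          (16 * ((n : ℝ) - 1 + e + d) ^ 2)) ∧
    (∀ n : ℕ, Odd n → 1 ≤ n → n ≤ N - 1 →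
      biU r₁ r₂ ρ₁ ρ₂ n =
        ((n : ℝ) - 1 + 2 * e + 2 * d + (N : ℝ)) * ((n : ℝ) - 1 + 2 * d)
          * ((n : ℝ) - 1 + 2 * e) * (-(n : ℝ) + 1 + (N : ℝ)) /
          (16 * ((n : ℝ) - 1 + e + d) ^ 2)) ∧
    (∀ n : ℕ, 1 ≤ n → n ≤ N → 0 < biU r₁ r₂ ρ₁ ρ₂ n) ∧
    biU r₁ r₂ ρ₁ ρ₂ (N + 1) = 0 := by
  subst hr₂ hρ₁ hρ₂
  have heven : ∀ n : ℕ, Even n →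
      biU r₁ (r₁ + e + (N : ℝ) / 2) (r₁ + e + d + ((N : ℝ) - 1) / 2) (r₁ - 1/2 + e) n =
        (n : ℝ) * ((n : ℝ) + 4 * r₁ - 2 + 4 * e + 2 * d + (N : ℝ))
          * (-(n : ℝ) + 4 * r₁ + 2 * e + (N : ℝ)) * ((n : ℝ) - 2 + 2 * e + 2 * d) /
          (16 * ((n : ℝ) - 1 + e + d) ^ 2) := by
    intro n hn
    simp only [biU, if_pos hn]
    ring_nf
  have hodd : ∀ n : ℕ, ¬ Even n →
      biU r₁ (r₁ + e + (N : ℝ) / 2) (r₁ + e + d + ((N : ℝ) - 1) / 2) (r₁ - 1/2 + e) n =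
        ((n : ℝ) - 1 + 2 * e + 2 * d + (N : ℝ)) * ((n : ℝ) - 1 + 2 * d)
          * ((n : ℝ) - 1 + 2 * e) * (-(n : ℝ) + 1 + (N : ℝ)) /
          (16 * ((n : ℝ) - 1 + e + d) ^ 2) := by
    intro n hn
    simp only [biU, if_neg hn]
    ring_nf
  refine ⟨fun n hn _ _ => heven n hn, fun n hn _ _ => hodd n (Nat.not_even_iff_odd.mpr hn), ?_, ?_⟩
  · intro n h1 hNle
    have hden : (0:ℝ) < 16 * ((n : ℝ) - 1 + e + d) ^ 2 := by
      have h1' : (1:ℝ) ≤ (n : ℝ) := by exact_mod_cast h1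
      have : (0:ℝ) < (n : ℝ) - 1 + e + d := by linarith
      positivity
    have hNle' : (n : ℝ) ≤ (N : ℝ) := by exact_mod_cast hNle
    rcases Nat.even_or_odd n with hn | hn
    · rw [heven n hn]
      have h2 : 2 ≤ n := by
        rcases hn with ⟨k, rfl⟩; omega
      have h2' : (2:ℝ) ≤ (n : ℝ) := by exact_mod_cast h2
      apply div_pos _ hden
      have f1 : (0:ℝ) < (n : ℝ) := by linarith
      have f2 : (0:ℝ) < (n : ℝ) + 4 * r₁ - 2 + 4 * e + 2 * d + (N : ℝ) := by
        have : (0:ℝ) ≤ (N : ℝ) := Nat.cast_nonneg N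
        linarith
      have f3 : (0:ℝ) < -(n : ℝ) + 4 * r₁ + 2 * e + (N : ℝ) := by linarith
      have f4 : (0:ℝ) < (n : ℝ) - 2 + 2 * e + 2 * d := by linarith
      exact mul_pos (mul_pos (mul_pos f1 f2) f3) f4
    · rw [hodd n (Nat.not_even_iff_odd.mpr hn)]
      have hne : n ≠ N := by rintro rfl; exact (Nat.not_odd_iff_even.mpr hN) hn
      have hlt : n < N := lt_of_le_of_ne hNle hne
      have hlt' : (n : ℝ) < (N : ℝ) := by exact_mod_cast hlt
      have h1' : (1:ℝ) ≤ (n : ℝ) := by exact_mod_cast h1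
      apply div_pos _ hden
      have hNpos : (0:ℝ) < (N : ℝ) := by linarith
      have f1 : (0:ℝ) < (n : ℝ) - 1 + 2 * e + 2 * d + (N : ℝ) := by linarith
      have f2 : (0:ℝ) < (n : ℝ) - 1 + 2 * d := by linarith
      have f3 : (0:ℝ) < (n : ℝ) - 1 + 2 * e := by linarith
      have f4 : (0:ℝ) < -(n : ℝ) + 1 + (N : ℝ) := by linarith
      exact mul_pos (mul_pos (mul_pos f1 f2) f3) f4
  · have hodd' : ¬ Even (N + 1) := by simp [Nat.even_add_one, hN]
    rw [hodd (N + 1) hodd']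
    push_cast
    ring_nf
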